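/- Equivalence (a)↔(d) of the Gaplessness Criteria. Let H be a nontrivial complex Hilbert space and A : H → H a bounded self-adjoint negative semidefinite operator with trivial kernel. Then the following are equivalent: (a) for every t > 0 the operator norm of exp(t·A) equals 1; (d) 0 is an accumulation point of the spectrum of A, i.e. for every ε > 0 there exists λ in the spectrum of A with 0 < |λ| < ε. -/

import Mathlib

/-!
Both conditions say that `A` is not invertible, i.e. `0 ∈ σ(A)`. By the continuous functional
calculus, `‖exp (t • A)‖` is the maximum of `exp (t * x)` over `σ(A) ⊆ (-∞, 0]`, which is `1`
exactly when `0 ∈ σ(A)`. The spectrum is closed, so an accumulation point `0` lies in it;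
conversely, if `0` were an isolated point of `σ(A)`, a continuous bump at `0` vanishing on the
rest of the spectrum would give a nonzero `P = f(A)` with `A * P = 0`, against injectivity.
-/

open scoped InnerProductSpace

section CStarAlgebra

variable {𝒜 : Type*} [CStarAlgebra 𝒜]

theorem IsSelfAdjoint.exp_smul_eq_cfc {a : 𝒜} (ha : IsSelfAdjoint a) (t : ℝ) :
    NormedSpace.exp (t • a) = cfc (fun x : ℝ => Real.exp (t * x)) a := by
  rw [← CFC.real_exp_eq_normedSpace_exp ((IsSelfAdjoint.all t).smul ha),
    ← cfc_comp_smul t Real.exp a]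
  rfl

theorem exists_ne_zero_mul_eq_zero_of_isolated_zero_mem_spectrum {a : 𝒜} [IsStarNormal a]
    (h0 : (0 : ℂ) ∈ spectrum ℂ a) {ε : ℝ} (hε : 0 < ε)
    (hgap : ∀ z ∈ spectrum ℂ a, ‖z‖ < ε → z = 0) : ∃ p : 𝒜, p ≠ 0 ∧ a * p = 0 := by
  set f : ℂ → ℂ := fun z => ((max (1 - ‖z‖ / ε) 0 : ℝ) : ℂ)
  refine ⟨cfc f a, fun hp => ?_, ?_⟩
  · exact one_pos.not_ge (by simpa [hp, f] using norm_apply_le_norm_cfc f a h0)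
  · have hf : ∀ z ∈ spectrum ℂ a, z * f z = 0 := by
      intro z hz
      rcases lt_or_ge ‖z‖ ε with hsmall | hlarge
      · simp [hgap z hz hsmall]
      · have : 1 ≤ ‖z‖ / ε := (one_le_div hε).2 hlarge
        simp [f, max_eq_right (sub_nonpos.2 this)]
    calc a * cfc f a = cfc (fun z => z * f z) a := by rw [cfc_mul (fun z => z) f a, cfc_id' ℂ a]
      _ = cfc (0 : ℂ → ℂ) a := cfc_congr hf
      _ = 0 := cfc_zero ℂ a

theorem not_isUnit_iff_exists_spectrum_near_zero {a : 𝒜} [IsStarNormal a]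
    (ha : IsLeftRegular a) :
    ¬IsUnit a ↔ ∀ ε : ℝ, 0 < ε → ∃ z ∈ spectrum ℂ a, 0 < ‖z‖ ∧ ‖z‖ < ε := by
  rw [← spectrum.zero_mem_iff ℂ]
  constructor
  · intro h0 ε hε
    by_contra! hgap
    obtain ⟨p, hp, hap⟩ := exists_ne_zero_mul_eq_zero_of_isolated_zero_mem_spectrum h0 hε
      fun z hz hzε => norm_le_zero_iff.1 (not_lt.1 fun hpos => (hgap z hz hpos).not_gt hzε)
    exact hp (ha (hap.trans (mul_zero a).symm))
  · intro h
    refine (spectrum.isClosed a).closure_subset (Metric.mem_closure_iff.2 fun ε hε => ?_)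
    obtain ⟨z, hz, -, hzε⟩ := h ε hε
    exact ⟨z, hz, by simpa using hzε⟩

variable [PartialOrder 𝒜] [StarOrderedRing 𝒜]

theorem norm_exp_smul_eq_one_iff {a : 𝒜} (ha : a ≤ 0) {t : ℝ} (ht : 0 < t) :
    ‖NormedSpace.exp (t • a)‖ = 1 ↔ ¬IsUnit a := by
  have hsa : IsSelfAdjoint a := by simpa using (IsSelfAdjoint.of_nonneg (neg_nonneg.2 ha)).neg
  have hσ : ∀ x ∈ spectrum ℝ a, x ≤ 0 := by
    simpa using (le_algebraMap_iff_spectrum_le (r := (0 : ℝ)) hsa).1 (by simpa using ha)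
  have hexp_lt (x : ℝ) : ‖Real.exp (t * x)‖ < 1 ↔ x < 0 := by
    rw [Real.norm_of_nonneg (Real.exp_nonneg _), Real.exp_lt_one_iff]
    simp [mul_neg_iff, ht, ht.not_gt]
  have hle : ‖cfc (fun x : ℝ => Real.exp (t * x)) a‖ ≤ 1 := by
    refine norm_cfc_le zero_le_one fun x hx => ?_
    rw [Real.norm_of_nonneg (Real.exp_nonneg _), Real.exp_le_one_iff]
    exact mul_nonpos_of_nonneg_of_nonpos ht.le (hσ x hx)
  rw [← spectrum.zero_mem_iff ℝ, hsa.exp_smul_eq_cfc, ← not_iff_not, ← ne_eq, ← hle.lt_iff_ne,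
    norm_cfc_lt_iff _ _ one_pos]
  exact ⟨fun h h0 => lt_irrefl 0 ((hexp_lt 0).1 (h 0 h0)),
    fun h x hx => (hexp_lt x).2 ((hσ x hx).lt_of_ne (ne_of_mem_of_not_mem hx h))⟩

end CStarAlgebra

theorem ContinuousLinearMap.nonpos_of_re_inner_nonpos {𝕜 E : Type*} [RCLike 𝕜]
    [NormedAddCommGroup E] [InnerProductSpace 𝕜 E] {T : E →L[𝕜] E}
    (hT : (T : E →ₗ[𝕜] E).IsSymmetric) (h : ∀ x, RCLike.re ⟪x, T x⟫_𝕜 ≤ 0) : T ≤ 0 := by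
  rw [ContinuousLinearMap.le_def, zero_sub]
  refine ⟨fun x y => by simpa using hT x y, fun x => ?_⟩
  simpa [ContinuousLinearMap.reApplyInnerSelf_apply, inner_re_symm (T x)] using h x

theorem ContinuousLinearMap.isLeftRegular_of_injective {R M : Type*} [Semiring R]
    [TopologicalSpace M] [AddCommMonoid M] [Module R M] {T : M →L[R] M}
    (hT : Function.Injective T) : IsLeftRegular T :=
  fun _ _ h => ContinuousLinearMap.ext fun x => hT congr($h x)

theorem gapless_a_iff_d_general
    {H : Type*} [NormedAddCommGroup H] [InnerProductSpace ℂ H] [CompleteSpace H]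
    (A : H →L[ℂ] H)
    (hsa : ∀ φ ψ : H, ⟪A φ, ψ⟫_ℂ = ⟪φ, A ψ⟫_ℂ)
    (hneg : ∀ φ : H, (⟪φ, A φ⟫_ℂ).re ≤ 0)
    (hker : ∀ φ : H, A φ = 0 → φ = 0) :
    (∀ t : ℝ, 0 < t → ‖NormedSpace.exp (t • A)‖ = 1) ↔
      (∀ ε : ℝ, 0 < ε → ∃ l ∈ spectrum ℂ A, 0 < ‖l‖ ∧ ‖l‖ < ε) := by
  have hA : A ≤ 0 := A.nonpos_of_re_inner_nonpos hsa hneg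
  have : IsStarNormal A := (LinearMap.IsSymmetric.isSelfAdjoint hsa).isStarNormal
  have hreg : IsLeftRegular A :=
    A.isLeftRegular_of_injective ((injective_iff_map_eq_zero A).2 hker)
  rw [← not_isUnit_iff_exists_spectrum_near_zero hreg]
  exact ⟨fun h => (norm_exp_smul_eq_one_iff hA one_pos).1 (h 1 one_pos),
    fun h t ht => (norm_exp_smul_eq_one_iff hA ht).2 h⟩

/-- Equivalence (a) ↔ (d) of the Gaplessness Criteria: for a bounded self-adjoint
negative-semidefinite operator `A` with trivial kernel on a nontrivial complex Hilbert
space, `‖exp (t • A)‖ = 1` for all `t > 0` iff `0` is an accumulation point of the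
spectrum of `A`. -/
theorem gapless_a_iff_d
    {H : Type*} [NormedAddCommGroup H] [InnerProductSpace ℂ H] [CompleteSpace H]
    [Nontrivial H] (A : H →L[ℂ] H)
    (hsa : ∀ φ ψ : H, ⟪A φ, ψ⟫_ℂ = ⟪φ, A ψ⟫_ℂ)
    (hreal : ∀ φ : H, (⟪φ, A φ⟫_ℂ).im = 0)
    (hneg : ∀ φ : H, (⟪φ, A φ⟫_ℂ).re ≤ 0)
    (hker : ∀ φ : H, A φ = 0 → φ = 0) :
    (∀ t : ℝ, 0 < t → ‖NormedSpace.exp (t • A)‖ = 1) ↔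
      (∀ ε : ℝ, 0 < ε → ∃ l ∈ spectrum ℂ A, 0 < ‖l‖ ∧ ‖l‖ < ε) :=
  gapless_a_iff_d_general A hsa hneg hker
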